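/- arXiv:2412.14757 — 5 statements merged into one kernel-verified Lean document; each statement's English description precedes it below -/
import Mathlib

section
/- Teleporting a layer of CZ gates via a graph state (Theorem 5): Let G be a finite simple graph on a finite vertex type V, and let ψ : (V → ZMod 2) → ℂ be any state of the computation register. Consider the protocol in which a graph-state register is prepared in |G⟩, an ancilla register is prepared in |+⟩^{⊗V}, the local gates CZ_{i,i'} and CZ_{i',i''} are applied for every i ∈ V (priming denotes the ancilla and double-priming the computation register), and all graph-state and ancilla qubits are measured in the X basis with outcomes recorded as bits m, m' : V → ZMod 2. Then for every w : V → ZMod 2 the resulting unnormalized amplitude on the computation register, F(w) = 2^{−2|V|} · Σ_{x,y : V → ZMod 2} (−1)^{Σ_{i∈V} (m i)(x i) + Σ_{i∈V} (m' i)(y i)} · (−1)^{Σ_{{i,j}∈E(G)} (x i)(x j)} · (−1)^{Σ_{i∈V} (x i)(y i) + Σ_{i∈V} (y i)(w i)} · ψ(w), satisfies F(w) = 2^{−|V|} · (−1)^{Σ_{i∈V} (m i)(m' i) + Σ_{{i,j}∈E(G)} (m' i)(m' j)} · (−1)^{Σ_{i∈V} (m i + Σ_{j∈N(i)} m' j)·(w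 i)} · (−1)^{Σ_{{i,j}∈E(G)} (w i)(w j)} · ψ(w). In other words, up to a global sign and the local Pauli corrections Z_{i''}^{m_i + Σ_{j∈N(i)} m'_j}, the protocol applies the entire layer of gates ∏_{{i,j}∈E(G)} CZ_{i''j''} to ψ using only the graph state |G⟩ and local operations. -/
/-!
Write every sign `(-1)^k` through the character `χ : ZMod 2 → ℂ`, `χ a = (-1)^a`. The amplitude
becomes a character sum over `x, y` with exponent `m·x + m'·y + q(x) + x·y + y·w`, where
`q(x) = ∑_{{i,j} ∈ E(G)} x i * x j`. Summing over the ancilla variable `y` is character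
orthogonality: it kills every `x` except `x = m' + w` and contributes `2^|V|`. What is left is the
polarization `q(m' + w) = q(m') + q(w) + (A m')·w` with `A` the adjacency matrix of `G`, and
`(A m') i = ∑_{j ∈ N(i)} m' j` is the Pauli correction.
-/

/-- The sum `∑_{{i,j} ∈ E(G)} (x i)·(x j)` of products of bits over the edges of `G`,
with bits cast to the natural numbers `0, 1`. -/
def edgePairSum {V : Type*} [Fintype V] [DecidableEq V] (G : SimpleGraph V)
    [DecidableRel G.Adj] (x : V → ZMod 2) : ℕ :=
  ∑ e ∈ G.edgeFinset,
    Sym2.lift ⟨fun i j => (x i).val * (x j).val, fun i j => Nat.mul_comm _ _⟩ e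

open Finset Matrix

def signChar (R : Type*) [Ring R] : AddChar (ZMod 2) R where
  toFun a := (-1) ^ a.val
  map_zero_eq_one' := by simp
  map_add_eq_mul' a b := by rw [ZMod.val_add, ← neg_one_pow_eq_pow_mod_two, pow_add]

@[simp]
theorem signChar_one {R : Type*} [Ring R] : signChar R 1 = -1 := pow_one _

theorem neg_one_pow_eq_signChar {R : Type*} [Ring R] (n : ℕ) :
    (-1 : R) ^ n = signChar R n := by
  rw [signChar, AddChar.coe_mk, ZMod.val_natCast, ← neg_one_pow_eq_pow_mod_two]

theorem sum_signChar_dotProduct {V R : Type*} [Fintype V] [DecidableEq V] [CommRing R]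
    [IsDomain R] [NeZero (2 : R)] (c : V → ZMod 2) :
    ∑ y, signChar R (c ⬝ᵥ y) = if c = 0 then 2 ^ Fintype.card V else 0 := by
  classical
  let χ : AddChar (V → ZMod 2) R := (signChar R).compAddMonoidHom
    { toFun := (c ⬝ᵥ ·), map_zero' := dotProduct_zero c, map_add' := dotProduct_add c }
  have hχ : χ = 0 ↔ c = 0 := by
    refine ⟨fun h => ?_, fun h => AddChar.eq_zero_iff.2 fun y => by simp [χ, h]⟩
    by_contra hc
    obtain ⟨i, hi⟩ := Function.ne_iff.1 hc
    have h1 : c i = 1 := (by decide : ∀ a : ZMod 2, a ≠ 0 → a = 1) _ hi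
    have hneg : (-1 : R) = 1 := by
      simpa [χ, dotProduct_single, h1] using AddChar.eq_zero_iff.1 h (Pi.single i 1)
    exact two_ne_zero (by linear_combination -hneg : (2 : R) = 0)
  calc ∑ y, signChar R (c ⬝ᵥ y) = ∑ y, χ y := rfl
    _ = _ := by simp [AddChar.sum_eq_ite, hχ, ZMod.card]

theorem natCast_sum_val_mul_val {V : Type*} [Fintype V] (a b : V → ZMod 2) :
    ((∑ i, (a i).val * (b i).val : ℕ) : ZMod 2) = a ⬝ᵥ b := by
  simp [dotProduct, ZMod.natCast_val]

namespace SimpleGraph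

variable {V : Type*} [Fintype V] (G : SimpleGraph V) [DecidableRel G.Adj]

theorem sum_neighborFinset_eq_sum_dart {M : Type*} [AddCommMonoid M] (g : V → V → M) :
    ∑ i, ∑ j ∈ G.neighborFinset i, g i j = ∑ d : G.Dart, g d.fst d.snd := by
  rw [sum_sigma']
  exact sum_bij' (fun p hp => ⟨(p.1, p.2), (G.mem_neighborFinset _ _).1 (mem_sigma.1 hp).2⟩)
    (fun d _ => ⟨d.fst, d.snd⟩) (fun _ _ => mem_univ _)
    (fun d _ => mem_sigma.2 ⟨mem_univ _, (G.mem_neighborFinset _ _).2 d.adj⟩)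
    (fun _ _ => rfl) (fun _ _ => rfl) (fun _ _ => rfl)

variable [DecidableEq V]

theorem sum_dart_eq_sum_edgeFinset {M : Type*} [AddCommMonoid M] (g : V → V → M) :
    ∑ d : G.Dart, g d.fst d.snd
      = ∑ e ∈ G.edgeFinset, Sym2.lift ⟨fun i j => g i j + g j i, fun _ _ => add_comm _ _⟩ e := by
  rw [← sum_fiberwise_of_maps_to (g := Dart.edge) fun d _ => G.mem_edgeFinset.2 d.edge_mem]
  refine sum_congr rfl fun e he => ?_
  induction e with
  | _ a b =>
    obtain ⟨d, hd⟩ : ∃ d : G.Dart, d.edge = s(a, b) := ⟨⟨(a, b), G.mem_edgeFinset.1 he⟩, rfl⟩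
    rw [← hd, d.edge_fiber, sum_pair d.symm_ne.symm]
    rfl

theorem sum_neighborFinset_eq_sum_edgeFinset {M : Type*} [AddCommMonoid M] (g : V → V → M) :
    ∑ i, ∑ j ∈ G.neighborFinset i, g i j
      = ∑ e ∈ G.edgeFinset, Sym2.lift ⟨fun i j => g i j + g j i, fun _ _ => add_comm _ _⟩ e := by
  rw [sum_neighborFinset_eq_sum_dart, sum_dart_eq_sum_edgeFinset]

def edgeForm {R : Type*} [CommSemiring R] (x : V → R) : R :=
  ∑ e ∈ G.edgeFinset, Sym2.lift ⟨fun i j => x i * x j, fun _ _ => mul_comm _ _⟩ e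

theorem natCast_edgePairSum (x : V → ZMod 2) : (edgePairSum G x : ZMod 2) = G.edgeForm x := by
  simp only [edgePairSum, edgeForm, Nat.cast_sum]
  refine sum_congr rfl fun e _ => ?_
  induction e with
  | _ a b => simp [Sym2.lift_mk, ZMod.natCast_val]

theorem edgeForm_add {R : Type*} [CommSemiring R] (x y : V → R) :
    G.edgeForm (x + y) = G.edgeForm x + G.edgeForm y + (G.adjMatrix R *ᵥ x) ⬝ᵥ y := by
  have hcross : (G.adjMatrix R *ᵥ x) ⬝ᵥ y = ∑ e ∈ G.edgeFinset,
      Sym2.lift ⟨fun i j => x j * y i + x i * y j, fun _ _ => add_comm _ _⟩ e := by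
    rw [← G.sum_neighborFinset_eq_sum_edgeFinset (fun i j => x j * y i)]
    simp only [dotProduct, adjMatrix_mulVec_apply, sum_mul]
  rw [hcross, edgeForm, edgeForm, edgeForm, ← sum_add_distrib, ← sum_add_distrib]
  refine sum_congr rfl fun e _ => ?_
  induction e with
  | _ a b => simp only [Sym2.lift_mk, Pi.add_apply]; ring

theorem dotProduct_add_edgeForm_add {R : Type*} [CommSemiring R] (m m' w : V → R) :
    m ⬝ᵥ (m' + w) + G.edgeForm (m' + w)
      = m ⬝ᵥ m' + G.edgeForm m' + (m + G.adjMatrix R *ᵥ m') ⬝ᵥ w + G.edgeForm w := by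
  rw [edgeForm_add, dotProduct_add, add_dotProduct]
  ring

theorem sum_sum_signChar_eq_two_pow_mul {R : Type*} [CommRing R] [IsDomain R] [NeZero (2 : R)]
    (m m' w : V → ZMod 2) :
    ∑ x, ∑ y, signChar R (m ⬝ᵥ x + m' ⬝ᵥ y + G.edgeForm x + (x ⬝ᵥ y + y ⬝ᵥ w))
      = 2 ^ Fintype.card V * signChar R
          (m ⬝ᵥ m' + G.edgeForm m' + (m + G.adjMatrix (ZMod 2) *ᵥ m') ⬝ᵥ w + G.edgeForm w) := by
  have hinner : ∀ x, ∑ y, signChar R (m ⬝ᵥ x + m' ⬝ᵥ y + G.edgeForm x + (x ⬝ᵥ y + y ⬝ᵥ w))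
      = signChar R (m ⬝ᵥ x + G.edgeForm x) * ∑ y, signChar R ((m' + x + w) ⬝ᵥ y) := by
    intro x
    rw [mul_sum]
    refine sum_congr rfl fun y _ => ?_
    rw [← AddChar.map_add_eq_mul, add_dotProduct, add_dotProduct, dotProduct_comm y w]
    ring_nf
  have hsupport : ∀ x : V → ZMod 2, m' + x + w = 0 ↔ x = m' + w := fun x => by
    simp only [funext_iff, Pi.add_apply, Pi.zero_apply]
    exact forall_congr' fun i => (by decide : ∀ a b c : ZMod 2, a + b + c = 0 ↔ b = a + c) _ _ _
  simp_rw [hinner, sum_signChar_dotProduct, hsupport, mul_ite, mul_zero, sum_ite_eq', mem_univ,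
    if_true, dotProduct_add_edgeForm_add, mul_comm]

end SimpleGraph

/-- **Teleporting a layer of CZ gates via a graph state.**
After preparing the graph state `|G⟩` and the ancillas `|+⟩^{⊗V}`, applying the local
gates `CZ_{i,i'}` and `CZ_{i',i''}` for every `i ∈ V`, and measuring the graph-state
and ancilla registers in the `X` basis with outcomes `m, m' : V → ZMod 2`, the
unnormalized amplitude on the computation register equals — up to a global sign and the
local Pauli corrections `Z_{i''}^{m_i + Σ_{j∈N(i)} m'_j}` — the result of applying the
whole layer `∏_{{i,j}∈E(G)} CZ_{i''j''}` to `ψ`. -/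
theorem cz_layer_teleportation {V : Type*} [Fintype V] [DecidableEq V]
    (G : SimpleGraph V) [DecidableRel G.Adj]
    (ψ : (V → ZMod 2) → ℂ) (m m' w : V → ZMod 2) :
    (2 : ℂ) ^ (-(2 * (Fintype.card V : ℤ))) *
      ∑ x : V → ZMod 2, ∑ y : V → ZMod 2,
        (-1 : ℂ) ^ (∑ i, (m i).val * (x i).val + ∑ i, (m' i).val * (y i).val) *
        (-1 : ℂ) ^ edgePairSum G x *
        (-1 : ℂ) ^ (∑ i, (x i).val * (y i).val + ∑ i, (y i).val * (w i).val) *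
        ψ w
    = (2 : ℂ) ^ (-(Fintype.card V : ℤ)) *
        (-1 : ℂ) ^ (∑ i, (m i).val * (m' i).val + edgePairSum G m') *
        (-1 : ℂ) ^ (∑ i, (m i + ∑ j ∈ G.neighborFinset i, m' j).val * (w i).val) *
        (-1 : ℂ) ^ edgePairSum G w * ψ w := by
  have hcorrection : (fun i => m i + ∑ j ∈ G.neighborFinset i, m' j)
      = m + G.adjMatrix (ZMod 2) *ᵥ m' := by
    ext i
    simp
  have hnorm : (2 : ℂ) ^ (-(2 * (Fintype.card V : ℤ))) * 2 ^ Fintype.card V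
      = 2 ^ (-(Fintype.card V : ℤ)) := by
    rw [← zpow_natCast, ← zpow_add₀ two_ne_zero]
    ring_nf
  simp only [← pow_add, ← sum_mul]
  simp only [neg_one_pow_eq_signChar, Nat.cast_add, natCast_sum_val_mul_val,
    G.natCast_edgePairSum, hcorrection]
  rw [G.sum_sum_signChar_eq_two_pow_mul, ← hnorm]
  simp only [AddChar.map_add_eq_mul]
  ring
end

section
/- Secrecy of the [N,N] parity-encoded quantum secret against every proper subset of clients: Let S and T be finite types with T nonempty, let n = |S| + |T|, and let α, β : ℂ satisfy |α|² + |β|² = 1 and α·conj(β) + conj(α)·β = 0 (i.e., α·conj(β) is purely imaginary). Let Ψ : ((S ⊕ T) → ZMod 2) → ℂ be the normalized parity-encoded state, Ψ(x) = 2^{−(n−1)/2}·(α if Σ x = 0 in ZMod 2 else β). Then the reduced density matrix on the shares S, with entries ρ(a, b) = Σ_{z : T → ZMod 2} Ψ(a ⊕ z) · conj(Ψ(b ⊕ z)) for a, b : S → ZMod 2 (where a ⊕ z denotes the combined assignment on S ⊕ T), is given by ρ(a, b) = 2^{−|S|} if Σ_{s∈S} a s = Σ_{s∈S} b s in ZMod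 2, and ρ(a, b) = 0 otherwise. In particular ρ is completely independent of the secret (α, β), so no proper subset of the clients can obtain any information about the shared secret state. -/
/-!
Splitting the sum over all qubits as `Σ a + Σ z`, the summand depends on `z` only through the
parity `Σ z`.  For nonempty `T`, the parity of a uniformly random `z : T → ZMod 2` is uniform
(translate one coordinate), so the trace over `T` becomes `2 ^ (|T| - 1)` times a sum over the two
parities.  That sum is `|α|² + |β|² = 1` when `Σ a = Σ b`, and the cross term
`α · conj β + conj α · β = 0` otherwise.
-/

open Finset ComplexConjugate

section SumOfCoordinates

variable {T G M : Type*} [Fintype T] [DecidableEq T] [Nonempty T] [AddCommGroup G] [Fintype G]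
  [AddCommMonoid M]

theorem sum_comp_sum_add (h : G → M) (g : G) :
    ∑ z : T → G, h (∑ t, z t + g) = ∑ z : T → G, h (∑ t, z t) := by
  obtain ⟨t₀⟩ := ‹Nonempty T›
  refine Fintype.sum_equiv (Equiv.addRight (Pi.single t₀ g)) _ _ fun z ↦ ?_
  simp [sum_add_distrib]

theorem card_nsmul_sum_comp_sum (h : G → M) :
    Fintype.card G • ∑ z : T → G, h (∑ t, z t) = Fintype.card G ^ Fintype.card T • ∑ g, h g :=
  calc Fintype.card G • ∑ z : T → G, h (∑ t, z t)
      = ∑ g : G, ∑ z : T → G, h (∑ t, z t + g) := by simp [sum_comp_sum_add]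
    _ = ∑ z : T → G, ∑ g : G, h (∑ t, z t + g) := sum_comm
    _ = ∑ _z : T → G, ∑ g : G, h g :=
        sum_congr rfl fun _ _ ↦ Equiv.sum_comp (Equiv.addLeft _) h
    _ = Fintype.card G ^ Fintype.card T • ∑ g, h g := by simp

end SumOfCoordinates

def parityAmp (α β : ℂ) (k : ZMod 2) : ℂ := if k = 0 then α else β

theorem sum_parityAmp_mul_conj (α β : ℂ) (p q : ZMod 2) :
    ∑ k, parityAmp α β (p + k) * conj (parityAmp α β (q + k)) =
      if p = q then ((‖α‖ ^ 2 + ‖β‖ ^ 2 : ℝ) : ℂ) else α * conj β + conj α * β := by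
  have hcases : ∀ k : ZMod 2, k = 0 ∨ k = 1 := by decide
  rw [show ∀ f : ZMod 2 → ℂ, ∑ k, f k = f 0 + f 1 from Fin.sum_univ_two]
  rcases hcases p with rfl | rfl <;> rcases hcases q with rfl | rfl <;>
    simp [parityAmp, Complex.mul_conj, Complex.normSq_eq_norm_sq,
      (by decide : (1 + 1 : ZMod 2) = 0)] <;>
    ring

theorem two_rpow_neg_half_mul_self (m : ℕ) :
    (2 : ℝ) ^ (-((m : ℝ) - 1) / 2) * (2 : ℝ) ^ (-((m : ℝ) - 1) / 2) = 2 * 2 ^ (-(m : ℤ)) := by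
  rw [← Real.rpow_add two_pos,
    show -((m : ℝ) - 1) / 2 + -((m : ℝ) - 1) / 2 = 1 + ((-m : ℤ) : ℝ) by push_cast; ring,
    Real.rpow_add two_pos, Real.rpow_one, Real.rpow_intCast]

/-- **Secrecy of the `[N,N]` parity-encoded quantum secret against every proper subset
of clients.**  Let `n = |S| + |T|` with `T` nonempty, and let the secret amplitudes
satisfy `|α|² + |β|² = 1` and `α·conj β + conj α·β = 0`.  For the normalized
parity-encoded state `Ψ(x) = 2^{−(n−1)/2}·(α if Σx = 0 else β)`, the reduced density
matrix on the shares `S` is `ρ(a,b) = 2^{−|S|}` if `Σ a = Σ b (mod 2)` and `0`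
otherwise; in particular it is independent of the secret `(α, β)`. -/
theorem parity_encoding_secrecy (S T : Type*) [Fintype S] [Fintype T] [DecidableEq T] [Nonempty T]
    (α β : ℂ)
    (hnorm : ‖α‖ ^ 2 + ‖β‖ ^ 2 = 1)
    (himag : α * (starRingEnd ℂ) β + (starRingEnd ℂ) α * β = 0)
    (Ψ : ((S ⊕ T) → ZMod 2) → ℂ)
    (hΨ : ∀ x, Ψ x =
      (((2 : ℝ) ^ (-(((Fintype.card S + Fintype.card T : ℕ) : ℝ) - 1) / 2) : ℝ) : ℂ) *
        (if (∑ i, x i) = 0 then α else β))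
    (a b : S → ZMod 2) :
    (∑ z : T → ZMod 2, Ψ (Sum.elim a z) * (starRingEnd ℂ) (Ψ (Sum.elim b z)))
      = if (∑ s, a s) = (∑ s, b s) then (2 : ℂ) ^ (-(Fintype.card S : ℤ)) else 0 := by
  set c : ℝ := (2 : ℝ) ^ (-(((Fintype.card S + Fintype.card T : ℕ) : ℝ) - 1) / 2)
  set ρ : ZMod 2 → ℂ := fun k ↦
    parityAmp α β (∑ s, a s + k) * conj (parityAmp α β (∑ s, b s + k))
  have hsummand (z : T → ZMod 2) :
      Ψ (Sum.elim a z) * conj (Ψ (Sum.elim b z)) = (c * c : ℝ) * ρ (∑ t, z t) := by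
    simp only [hΨ, Fintype.sum_sum_type, Sum.elim_inl, Sum.elim_inr, map_mul,
      Complex.conj_ofReal, ρ, parityAmp]
    push_cast
    ring
  have hc : c * c = 2 * 2 ^ (-((Fintype.card S + Fintype.card T : ℕ) : ℤ)) :=
    two_rpow_neg_half_mul_self _
  have htrace : 2 * ∑ z : T → ZMod 2, ρ (∑ t, z t) = 2 ^ Fintype.card T * ∑ k, ρ k := by
    simpa using card_nsmul_sum_comp_sum ρ
  calc ∑ z : T → ZMod 2, Ψ (Sum.elim a z) * conj (Ψ (Sum.elim b z))
      = (c * c : ℝ) * ∑ z : T → ZMod 2, ρ (∑ t, z t) := by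
        rw [mul_sum]; exact sum_congr rfl fun z _ ↦ hsummand z
    _ = 2 ^ (-(Fintype.card S : ℤ)) * ∑ k, ρ k := by
        rw [hc]
        push_cast
        rw [mul_comm 2, mul_assoc, htrace, ← mul_assoc, ← zpow_natCast, ← zpow_add₀ two_ne_zero]
        ring_nf
    _ = _ := by
        rw [sum_parityAmp_mul_conj, hnorm, himag]
        split_ifs <;> simp
end

section
/- Upper bound on shot usage given unlimited memory (Theorem 2, existence part): For every distribution instance (G_N, W_c, G_S, α_D) in which G_N is connected and V_N is nonempty, there exists a natural number N ≤ ⌊|V_S|/2⌋ and a valid N-shot Bell pair strategy for the instance. -/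
/-- A one-shot Bell pair strategy on the network `(G_N, W_c)` for a graph state with
vertex type `V_S`: it assigns to each oriented channel `(u,v)` and each graph-state
vertex `s` a value in `{-1, 0, 1}`, antisymmetrically in the orientation, vanishing off
the channels of the network, and such that each channel `e` is used at most `W_c e`
times in total. -/
structure OneShotStrategy (V_N V_S : Type*) [Fintype V_S]
    (G_N : SimpleGraph V_N) (W_c : Sym2 V_N → ℕ) where
  b : V_N → V_N → V_S → ℤ
  antisymm : ∀ u v s, b u v s = - b v u s
  bounded : ∀ u v s, |b u v s| ≤ 1
  supported : ∀ u v, ¬ G_N.Adj u v → ∀ s, b u v s = 0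
  capacity : ∀ u v, G_N.Adj u v →
    (∑ s : V_S, |b u v s|) ≤ (W_c s(u, v) : ℤ)

/-- The reachable set of the graph-state vertex `s` under the `N`-shot strategy `bs`:
the smallest set of network nodes containing the assigned node `αD s` and closed under
following, from a reached node `u`, any positively-assigned oriented channel `(u,v)` of
any of the one-shot strategies in `bs`. -/
inductive Reachable {V_N V_S : Type*} [Fintype V_S] {G_N : SimpleGraph V_N}
    {W_c : Sym2 V_N → ℕ} (bs : List (OneShotStrategy V_N V_S G_N W_c))
    (αD : V_S → V_N) (s : V_S) : V_N → Prop
  | base : Reachable bs αD s (αD s)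
  | step {u v : V_N} (bk : OneShotStrategy V_N V_S G_N W_c) :
      Reachable bs αD s u → bk ∈ bs → 0 < bk.b u v s → Reachable bs αD s v

/-- An `N`-shot strategy `bs` is valid for the instance `(G_N, W_c, G_S, αD)` if for
every edge `s₁s₂` of the graph state the reachable sets of `s₁` and `s₂` intersect. -/
def IsValid {V_N V_S : Type*} [Fintype V_S] {G_N : SimpleGraph V_N}
    {W_c : Sym2 V_N → ℕ} (bs : List (OneShotStrategy V_N V_S G_N W_c))
    (G_S : SimpleGraph V_S) (αD : V_S → V_N) : Prop :=
  ∀ s₁ s₂, G_S.Adj s₁ s₂ → ∃ n, Reachable bs αD s₁ n ∧ Reachable bs αD s₂ n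

/-!
Route every vertex `s` of the graph state along a walk from `αD s` to a common root `r` such that
each channel lies on at most `⌊|V_S|/2⌋` of the walks. Such routes exist by induction on the
network: delete a vertex `v` that leaves it connected; if more than half of the walks start at `v`,
let all of them end at `v`; otherwise start those at `v` from a neighbour `u` instead, route in
the smaller network and prepend the channel `vu`.

After shortening the walks to paths, number the paths through each channel injectively by
`0, …, ⌊|V_S|/2⌋ - 1`; shot `k` moves `s` across every channel of its path where it has number `k`.
No shot then uses a channel twice, and all reachable sets contain `r`.
-/

open Finset

theorem Finset.exists_injOn_lt_of_card_le {α : Type*} {s : Finset α} {N : ℕ} (h : #s ≤ N) :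
    ∃ g : α → ℕ, (∀ a ∈ s, g a < N) ∧ Set.InjOn g s := by
  obtain ⟨g, hmaps, hinj⟩ :=
    s.finite_toSet.exists_injOn_of_encard_le (t := (range N : Set ℕ)) <| by
      rw [Set.encard_coe_eq_coe_finsetCard, Set.encard_coe_eq_coe_finsetCard, card_range]
      exact_mod_cast h
  exact ⟨g, fun a ha ↦ mem_range.mp (hmaps ha), hinj⟩

namespace SimpleGraph

variable {V V' α : Type*} [Fintype α] {G : SimpleGraph V}

theorem Walk.IsPath.ne_of_mem_edges {u v : V} {p : G.Walk u v} (hp : p.IsPath) {e : Sym2 V}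
    (he : e ∈ p.edges) : u ≠ v := by
  rintro rfl
  simp [edges_eq_nil.mpr (isPath_iff_nil.mp hp)] at he

theorem Walk.IsTrail.symm_notMem_darts {u v : V} {p : G.Walk u v} (hp : p.IsTrail) {d : G.Dart}
    (hd : d ∈ p.darts) : d.symm ∉ p.darts :=
  fun hd' ↦ d.symm_ne (List.inj_on_of_nodup_map hp.edges_nodup hd' hd d.edge_symm)

section Congestion

variable [DecidableEq V] {f : α → V} {r : V}

def Walk.congestion (p : ∀ a, G.Walk (f a) r) (e : Sym2 V) : ℕ :=
  #{a | e ∈ (p a).edges}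

theorem Walk.congestion_bypass_le (p : ∀ a, G.Walk (f a) r) (e : Sym2 V) :
    congestion (fun a ↦ (p a).bypass) e ≤ congestion p e :=
  card_le_card <| monotone_filter_right _ fun _ _ he ↦ (p _).edges_bypass_subset_edges he

theorem Walk.exists_congestion_map_le [DecidableEq V'] {G' : SimpleGraph V'} {φ : G →g G'}
    (hφ : Function.Injective φ) (p : ∀ a, G.Walk (f a) r) (e : Sym2 V') :
    ∃ e', congestion (fun a ↦ (p a).map φ) e ≤ congestion p e' := by
  by_cases he : ∃ e', Sym2.map φ e' = e
  · obtain ⟨e', rfl⟩ := he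
    refine ⟨e', card_le_card <| monotone_filter_right _ fun a _ h ↦ ?_⟩
    rwa [edges_map, List.mem_map_of_injective (Sym2.map.injective hφ)] at h
  · refine ⟨s(r, r), (card_eq_zero.mpr <| filter_eq_empty_iff.mpr fun a _ h ↦ ?_).trans_le
      (Nat.zero_le _)⟩
    obtain ⟨e', -, rfl⟩ := List.mem_map.mp (edges_map φ (p a) ▸ h)
    exact he ⟨e', rfl⟩

theorem Preconnected.exists_walks_congestion_le (hG : G.Preconnected) (f : α → V) (r : V) :
    ∃ p : ∀ a, G.Walk (f a) r, ∀ e, Walk.congestion p e ≤ #{a | f a ≠ r} :=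
  ⟨fun a ↦ (hG (f a) r).some.bypass, fun _ ↦ card_le_card <| monotone_filter_right _
    fun _ _ ↦ (Walk.bypass_isPath _).ne_of_mem_edges⟩

theorem Adj.exists_walks_congestion_le_of_move {v u : V} (hvu : G.Adj v u) {f' : α → V}
    (hf'v : ∀ a, f a = v → f' a = u) (hf' : ∀ a, f a ≠ v → f' a = f a)
    (q : ∀ a, G.Walk (f' a) r) (hq : ∀ a, s(v, u) ∉ (q a).edges) :
    ∃ p : ∀ a, G.Walk (f a) r, Walk.congestion p s(v, u) ≤ #{a | f a = v} ∧
      ∀ e ≠ s(v, u), Walk.congestion p e ≤ Walk.congestion q e := by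
  let p a : G.Walk (f a) r :=
    if h : f a = v then (Walk.cons hvu ((q a).copy (hf'v a h) rfl)).copy h.symm rfl
    else (q a).copy (hf' a h) rfl
  have hp : ∀ a e, e ∈ (p a).edges → (e = s(v, u) ∧ f a = v) ∨ e ∈ (q a).edges := by
    intro a e he
    by_cases h : f a = v
    · simp only [p, dif_pos h, Walk.edges_copy, Walk.edges_cons, List.mem_cons] at he
      exact he.imp (⟨·, h⟩) id
    · simp only [p, dif_neg h, Walk.edges_copy] at he
      exact .inr he
  refine ⟨p, card_le_card <| monotone_filter_right _ fun a _ he ↦ ?_,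
    fun e hne ↦ card_le_card <| monotone_filter_right _ fun a _ he ↦ ?_⟩
  · exact ((hp a _ he).resolve_right (hq a)).2
  · exact (hp a e he).resolve_left (hne ·.1)

end Congestion

theorem Connected.exists_walks_congestion_le_half [Finite V] [DecidableEq V] (hG : G.Connected)
    (f : α → V) :
    ∃ r, ∃ p : ∀ a, G.Walk (f a) r, ∀ e, Walk.congestion p e ≤ Fintype.card α / 2 := by
  revert ‹DecidableEq V› G f
  induction V using Finite.induction_subsingleton_or_nontrivial with
  | hbase V =>
    intro G _ hG f
    obtain ⟨r⟩ := hG.nonempty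
    obtain ⟨p, hp⟩ := hG.preconnected.exists_walks_congestion_le f r
    exact ⟨r, p, fun e ↦ (hp e).trans (by simp [Subsingleton.elim _ r])⟩
  | hstep V ih =>
    intro G _ hG f
    obtain ⟨v, hv⟩ := hG.exists_connected_induce_compl_singleton_of_finite_nontrivial
    by_cases hmaj : Fintype.card α / 2 < #{a | f a = v}
    · obtain ⟨p, hp⟩ := hG.preconnected.exists_walks_congestion_le f v
      refine ⟨v, p, fun e ↦ (hp e).trans ?_⟩
      have := card_filter_add_card_filter_not (s := univ) (fun a ↦ f a = v)
      simp only [← ne_eq, card_univ] at this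
      omega
    obtain ⟨u, hvu⟩ := hG.preconnected.exists_adj_of_nontrivial v
    let f' (a : α) : ({v}ᶜ : Set V) :=
      if h : f a = v then ⟨u, hvu.ne.symm⟩ else ⟨f a, h⟩
    obtain ⟨r, p', hp'⟩ := ih _ (Finite.card_subtype_lt (p := (· ∈ ({v}ᶜ : Set V))) (x := v)
      (by simp)) hv f'
    let ι := Embedding.induce (G := G) ({v}ᶜ : Set V)
    have hv_notMem (a : α) : s(v, u) ∉ ((p' a).map ι.toHom).edges := fun h ↦ by
      obtain ⟨x, -, hx⟩ := List.mem_map.mp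
        (Walk.support_map _ _ ▸ Walk.fst_mem_support_of_mem_edges _ h)
      exact x.2 hx
    obtain ⟨p, hpvu, hp⟩ := hvu.exists_walks_congestion_le_of_move (f := f)
      (f' := fun a ↦ ι (f' a)) (fun a h ↦ by simp [ι, f', h]) (fun a h ↦ by simp [ι, f', h])
      (fun a ↦ (p' a).map ι.toHom) hv_notMem
    refine ⟨ι r, p, fun e ↦ ?_⟩
    by_cases he : e = s(v, u)
    · exact he ▸ hpvu.trans (not_lt.mp hmaj)
    · obtain ⟨e', he'⟩ := Walk.exists_congestion_map_le (φ := ι.toHom) ι.injective p' e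
      exact (hp e he).trans (he'.trans (hp' e'))

end SimpleGraph

namespace OneShotStrategy

variable {V_N V_S : Type*} [Fintype V_S] {G : SimpleGraph V_N} {W : Sym2 V_N → ℕ}

def ofMoves (moves : V_N → V_N → V_S → Prop) [∀ x y s, Decidable (moves x y s)]
    (hadj : ∀ x y s, moves x y s → G.Adj x y) (hasymm : ∀ x y s, moves x y s → ¬ moves y x s)
    (hcap : ∀ x y, G.Adj x y → #{s | moves x y s ∨ moves y x s} ≤ W s(x, y)) :
    OneShotStrategy V_N V_S G W where
  b x y s := if moves x y s then 1 else if moves y x s then -1 else 0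
  antisymm x y s := by
    by_cases h : moves x y s
    · simp [h, hasymm x y s h]
    · by_cases h' : moves y x s <;> simp [h, h']
  bounded x y s := by split_ifs <;> simp
  supported x y hxy s := by
    rw [if_neg (hxy ∘ hadj x y s), if_neg fun h ↦ hxy (hadj y x s h).symm]
  capacity x y hxy := by
    calc ∑ s, |if moves x y s then (1 : ℤ) else if moves y x s then -1 else 0|
        = ∑ s, if moves x y s ∨ moves y x s then (1 : ℤ) else 0 :=
          sum_congr rfl fun s _ ↦ by split_ifs <;> simp_all
      _ = #{s | moves x y s ∨ moves y x s} := by rw [sum_boole]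
      _ ≤ W s(x, y) := by exact_mod_cast hcap x y hxy

theorem ofMoves_b_pos {moves : V_N → V_N → V_S → Prop} [∀ x y s, Decidable (moves x y s)]
    {hadj hasymm hcap} {x y : V_N} {s : V_S} (h : moves x y s) :
    0 < (ofMoves (G := G) (W := W) moves hadj hasymm hcap).b x y s := by
  simp [ofMoves, h]

end OneShotStrategy

theorem Reachable.of_walk {V_N V_S : Type*} [Fintype V_S] {G : SimpleGraph V_N}
    {W : Sym2 V_N → ℕ} {bs : List (OneShotStrategy V_N V_S G W)} {αD : V_S → V_N} {s : V_S}
    {x y : V_N} (w : G.Walk x y) (hw : ∀ d ∈ w.darts, ∃ bk ∈ bs, 0 < bk.b d.fst d.snd s)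
    (hx : Reachable bs αD s x) : Reachable bs αD s y := by
  induction w with
  | nil => exact hx
  | cons _ w ih =>
    simp only [SimpleGraph.Walk.darts_cons, List.forall_mem_cons] at hw
    obtain ⟨bk, hbk, hpos⟩ := hw.1
    exact ih hw.2 (.step bk hx hbk hpos)

theorem exists_strategies_reachable_of_congestion_le {V_N V_S : Type*} [Fintype V_S]
    [DecidableEq V_N] {G : SimpleGraph V_N} {W : Sym2 V_N → ℕ} (hW : ∀ e ∈ G.edgeSet, 1 ≤ W e)
    {f : V_S → V_N} {r : V_N} (p : ∀ s, G.Walk (f s) r) (hp : ∀ s, (p s).IsTrail) {N : ℕ}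
    (hN : ∀ e, SimpleGraph.Walk.congestion p e ≤ N) :
    ∃ bs : List (OneShotStrategy V_N V_S G W), bs.length ≤ N ∧ ∀ s, Reachable bs f s r := by
  classical
  choose slot hslot_lt hslot_inj using fun e ↦ exists_injOn_lt_of_card_le (hN e)
  let moves (K : ℕ) (x y : V_N) (s : V_S) : Prop :=
    ∃ h : G.Adj x y, ⟨(x, y), h⟩ ∈ (p s).darts ∧ slot s(x, y) s = K
  have hasymm K x y s : moves K x y s → ¬ moves K y x s := fun ⟨_, hd, _⟩ ⟨_, hd', _⟩ ↦
    (hp s).symm_notMem_darts hd hd'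
  have huser {s d} (hd : d ∈ (p s).darts) : s ∈ ({s | d.edge ∈ (p s).edges} : Finset V_S) :=
    mem_filter.mpr ⟨mem_univ _, List.mem_map_of_mem hd⟩
  have hslot {K x y s} : moves K x y s ∨ moves K y x s →
      s ∈ ({s | s(x, y) ∈ (p s).edges} : Finset V_S) ∧ slot s(x, y) s = K := by
    rintro (⟨_, hd, hK⟩ | ⟨_, hd, hK⟩)
    · exact ⟨huser hd, hK⟩
    · rw [Sym2.eq_swap]
      exact ⟨huser hd, hK⟩
  have hcap K x y : #{s | moves K x y s ∨ moves K y x s} ≤ 1 :=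
    card_le_one.mpr fun a ha b hb ↦ by
      obtain ⟨ha', rfl⟩ := hslot (mem_filter.mp ha).2
      obtain ⟨hb', hab⟩ := hslot (mem_filter.mp hb).2
      exact hslot_inj _ ha' hb' hab.symm
  let shot K := OneShotStrategy.ofMoves (W := W) (moves K) (fun _ _ _ h ↦ h.1) (hasymm K)
    (fun x y hxy ↦ (hcap K x y).trans (hW s(x, y) hxy))
  refine ⟨(List.range N).map shot, by simp, fun s ↦ Reachable.of_walk (p s) (fun d hd ↦
    ⟨shot (slot d.edge s), List.mem_map.mpr ⟨_, List.mem_range.mpr (hslot_lt _ _ ?_), rfl⟩,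
      OneShotStrategy.ofMoves_b_pos ⟨d.adj, hd, rfl⟩⟩) .base⟩
  exact huser hd

/-- **Upper bound on shot usage given unlimited memory (existence part).**
For every distribution instance with connected network, some valid `N`-shot Bell pair
strategy exists with `N ≤ ⌊|V_S|/2⌋`. -/
theorem shot_usage_upper_bound {V_N V_S : Type*} [Fintype V_N] [Fintype V_S]
    (G_N : SimpleGraph V_N) (hconn : G_N.Connected)
    (W_c : Sym2 V_N → ℕ) (hW : ∀ e ∈ G_N.edgeSet, 1 ≤ W_c e)
    (G_S : SimpleGraph V_S) (αD : V_S → V_N) :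
    ∃ bs : List (OneShotStrategy V_N V_S G_N W_c),
      bs.length ≤ Fintype.card V_S / 2 ∧ IsValid bs G_S αD := by
  classical
  obtain ⟨r, p, hp⟩ := hconn.exists_walks_congestion_le_half αD
  obtain ⟨bs, hlen, hreach⟩ := exists_strategies_reachable_of_congestion_le hW
    (fun s ↦ (p s).bypass) (fun s ↦ (p s).bypass_isPath.isTrail)
    (fun e ↦ (SimpleGraph.Walk.congestion_bypass_le p e).trans (hp e))
  exact ⟨bs, hlen, fun s₁ s₂ _ ↦ ⟨r, hreach s₁, hreach s₂⟩⟩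
end

section
/- Center-assigned one-shot distribution of a star graph state is equivalent to the Steiner tree problem (the correspondence established in the proof of Theorem 1, part 1): Let G be a finite simple graph, let the network be G_N = G with all channel widths equal to 1, let the graph state G_S be a star graph with center c₀ whose edge set is {c₀ s : s ∈ V_S, s ≠ c₀}, let S ⊆ V(G) be a set of nodes with |S| = |V_S|, and let α_D : V_S → V(G) be a bijection onto S. Then for every natural number m the following are equivalent: (i) there exists a valid one-shot Bell pair strategy b for this instance such that b((u,v), s) = 0 for every s ≠ c₀ and the number of channels e with b(e, c₀) ≠ 0 is at most m; (ii) G contains a connected subgraph H with at most m edges whose vertex set contains S. -/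
/-!
A strategy serving only the centre `c₀` is an orientation of the channels it uses for `c₀`.
The reachable sets of the leaves are then singletons, so validity says exactly that every
terminal is reached from `αD c₀` along oriented channels, and the component of `αD c₀` in the
used channels is a connected subgraph covering `S` with no more edges. Conversely, orienting
the edges of a connected `H ⊇ S` towards increasing distance from `αD c₀` in `H` reaches every
vertex of `H`, since each vertex other than the root has a neighbour one step closer to it.
-/

open Relation

theorem Int.abs_sign_le_one (z : ℤ) : |z.sign| ≤ 1 := by
  rcases Int.sign_trichotomy z with h | h | h <;> simp [h]

namespace SimpleGraph

variable {V : Type*}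

def IsStar (G : SimpleGraph V) (c : V) : Prop :=
  ∀ u v, G.Adj u v ↔ (u = c ∧ v ≠ c) ∨ (v = c ∧ u ≠ c)

theorem Reachable.exists_adj_dist_succ {K : SimpleGraph V} {r v : V} (h : K.Reachable r v)
    (hne : r ≠ v) : ∃ x, K.Adj x v ∧ K.dist r x + 1 = K.dist r v := by
  obtain ⟨p, hp⟩ := h.exists_walk_length_eq_dist
  cases hq : p.reverse with
  | nil => exact absurd rfl hne
  | @cons _ x _ hadj q =>
    have hlen : q.length + 1 = K.dist r v := by
      rw [← hp, ← p.length_reverse, hq, Walk.length_cons]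
    have hle : K.dist r x ≤ q.length := by simpa using dist_le q.reverse
    have hge : K.dist r v ≤ K.dist r x + 1 := by
      simpa [dist_eq_one_iff_adj.mpr hadj.symm] using hadj.symm.reachable.dist_triangle_right r
    exact ⟨x, hadj.symm, by omega⟩

theorem Reachable.reflTransGen_adj_dist_lt {K : SimpleGraph V} {r v : V} (h : K.Reachable r v) :
    ReflTransGen (fun x y => K.Adj x y ∧ K.dist r x < K.dist r y) r v := by
  induction hd : K.dist r v using Nat.strong_induction_on generalizing v with
  | _ n ih =>
    by_cases hne : r = v
    · exact hne ▸ ReflTransGen.refl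
    obtain ⟨x, hadj, hx⟩ := h.exists_adj_dist_succ hne
    have hrx : K.Reachable r x := h.trans hadj.symm.reachable
    exact (ih _ (by omega) hrx rfl).tail ⟨hadj, by omega⟩

theorem Subgraph.Connected.reachable_spanningCoe {G : SimpleGraph V} {H : G.Subgraph}
    (hH : H.Connected) {u v : V} (hu : u ∈ H.verts) (hv : v ∈ H.verts) :
    H.spanningCoe.Reachable u v :=
  (hH.preconnected ⟨u, hu⟩ ⟨v, hv⟩).map ⟨Subtype.val, id⟩

theorem exists_connected_subgraph_of_reachable {K G : SimpleGraph V} (hKG : K ≤ G) (r : V) :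
    ∃ H : G.Subgraph, H.Connected ∧ H.edgeSet ⊆ K.edgeSet ∧ {v | K.Reachable r v} ⊆ H.verts := by
  let C := K.connectedComponentMk r
  refine ⟨(toSubgraph K hKG).induce C.supp, ?_, ?_, ?_⟩
  · exact ⟨C.connected_toSimpleGraph.mono fun u v h => ⟨u.2, v.2, h⟩⟩
  · exact fun e => Sym2.ind (fun u v h => h.2.2) e
  · intro v hv
    exact (ConnectedComponent.eq.mpr hv).symm

end SimpleGraph

section Strategy

variable {V_N V_S : Type*} [Fintype V_S] {G_N : SimpleGraph V_N} {W_c : Sym2 V_N → ℕ}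

namespace OneShotStrategy

def channelGraph (b : OneShotStrategy V_N V_S G_N W_c) (s : V_S) : SimpleGraph V_N where
  Adj u v := b.b u v s ≠ 0
  symm := ⟨fun u v h => by rwa [b.antisymm, neg_ne_zero]⟩
  loopless := ⟨fun u h => h (by linarith [b.antisymm u u s])⟩

variable (b : OneShotStrategy V_N V_S G_N W_c) (s : V_S)

theorem channelGraph_le : b.channelGraph s ≤ G_N :=
  fun u v h => by_contra fun hG => h (b.supported u v hG s)

theorem edgeSet_channelGraph :
    (b.channelGraph s).edgeSet = {e | ∃ u v, e = s(u, v) ∧ b.b u v s ≠ 0} := by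
  ext e
  induction e using Sym2.ind with
  | _ x y =>
    rw [SimpleGraph.mem_edgeSet]
    refine ⟨fun h => ⟨x, y, rfl, h⟩, ?_⟩
    rintro ⟨u, v, huv, h⟩
    rcases Sym2.eq_iff.mp huv with ⟨rfl, rfl⟩ | ⟨rfl, rfl⟩
    · exact h
    · exact (b.channelGraph s).adj_symm h

end OneShotStrategy

theorem reachable_singleton_iff (b : OneShotStrategy V_N V_S G_N W_c) (αD : V_S → V_N) (s : V_S)
    (v : V_N) : Reachable [b] αD s v ↔ ReflTransGen (fun x y => 0 < b.b x y s) (αD s) v := by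
  constructor
  · intro h
    induction h with
    | base => exact .refl
    | step bk _ hbk hpos ih =>
      rw [List.mem_singleton] at hbk
      exact ih.tail (hbk ▸ hpos)
  · intro h
    induction h with
    | refl => exact .base
    | tail _ hpos ih => exact .step b ih (List.mem_singleton_self b) hpos

theorem reachable_singleton_iff_eq (b : OneShotStrategy V_N V_S G_N W_c) (αD : V_S → V_N)
    {s : V_S} (hs : ∀ u v, b.b u v s = 0) (v : V_N) : Reachable [b] αD s v ↔ v = αD s := by
  simpa [reachable_singleton_iff, hs] using reflTransGen_iff_eq fun _ h => h

theorem isValid_star_iff {G_S : SimpleGraph V_S} {c₀ : V_S} (hstar : G_S.IsStar c₀)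
    (b : OneShotStrategy V_N V_S G_N W_c) (αD : V_S → V_N)
    (hcenter : ∀ u v s, s ≠ c₀ → b.b u v s = 0) :
    IsValid [b] G_S αD ↔ ∀ s, Reachable [b] αD c₀ (αD s) := by
  have hleaf : ∀ s ≠ c₀, ∀ n, Reachable [b] αD s n ↔ n = αD s :=
    fun s hs => reachable_singleton_iff_eq b αD fun u v => hcenter u v s hs
  constructor
  · intro hvalid s
    by_cases hs : s = c₀
    · exact hs ▸ .base
    obtain ⟨n, hc₀, hn⟩ := hvalid c₀ s ((hstar c₀ s).mpr (.inl ⟨rfl, hs⟩))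
    exact (hleaf s hs n).mp hn ▸ hc₀
  · intro h s₁ s₂ hadj
    rcases (hstar s₁ s₂).mp hadj with ⟨rfl, -⟩ | ⟨rfl, -⟩
    · exact ⟨αD s₂, h s₂, .base⟩
    · exact ⟨αD s₁, .base, h s₁⟩

theorem exists_connected_subgraph_of_isValid_star {G_S : SimpleGraph V_S} {c₀ : V_S}
    (hstar : G_S.IsStar c₀)
    (b : OneShotStrategy V_N V_S G_N W_c) (αD : V_S → V_N)
    (hcenter : ∀ u v s, s ≠ c₀ → b.b u v s = 0) (hvalid : IsValid [b] G_S αD) :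
    ∃ H : G_N.Subgraph, H.Connected ∧ H.edgeSet ⊆ (b.channelGraph c₀).edgeSet ∧
      Set.range αD ⊆ H.verts := by
  obtain ⟨H, hconn, hedges, hverts⟩ :=
    SimpleGraph.exists_connected_subgraph_of_reachable (b.channelGraph_le c₀) (αD c₀)
  refine ⟨H, hconn, hedges, ?_⟩
  rintro _ ⟨s, rfl⟩
  have hs := (reachable_singleton_iff b αD c₀ _).mp
    ((isValid_star_iff hstar b αD hcenter).mp hvalid s)
  exact hverts ((SimpleGraph.reachable_iff_reflTransGen _ _).mpr
    (ReflTransGen.mono (fun _ _ h => h.ne') _ _ hs))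

namespace OneShotStrategy

variable [DecidableEq V_S] {K : SimpleGraph V_N} [DecidableRel K.Adj]

def orientBy (hK : K ≤ G_N) (hW : ∀ u v, G_N.Adj u v → 1 ≤ W_c s(u, v)) (c : V_S)
    (f : V_N → ℤ) : OneShotStrategy V_N V_S G_N W_c where
  b u v s := if s = c ∧ K.Adj u v then (f v - f u).sign else 0
  antisymm u v s := by
    simp only [K.adj_comm v u]
    split_ifs
    · rw [← Int.sign_neg, neg_sub]
    · rfl
  bounded u v s := by
    split_ifs
    exacts [Int.abs_sign_le_one _, by simp]
  supported u v hG s := if_neg fun h => hG (hK h.2)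
  capacity u v huv := by
    rw [Finset.sum_eq_single c (fun s _ hs => by rw [if_neg fun h => hs h.1, abs_zero])
      (by simp)]
    refine le_trans ?_ (Nat.one_le_cast.mpr (hW u v huv))
    split_ifs
    exacts [Int.abs_sign_le_one _, by simp]

variable (hK : K ≤ G_N) (hW : ∀ u v, G_N.Adj u v → 1 ≤ W_c s(u, v)) (c : V_S) (f : V_N → ℤ)

theorem orientBy_of_ne {s : V_S} (hs : s ≠ c) (u v : V_N) : (orientBy hK hW c f).b u v s = 0 :=
  if_neg fun h => hs h.1

theorem orientBy_pos {u v : V_N} (huv : K.Adj u v) (hf : f u < f v) :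
    0 < (orientBy hK hW c f).b u v c := by
  simp [orientBy, huv, Int.sign_eq_one_of_pos (sub_pos.mpr hf)]

theorem channelGraph_orientBy_le : (orientBy hK hW c f).channelGraph c ≤ K := by
  intro u v h
  by_contra hnot
  exact h (if_neg fun h => hnot h.2)

theorem isValid_star_orientBy_dist {G_S : SimpleGraph V_S} {c₀ : V_S}
    (hstar : G_S.IsStar c₀) (αD : V_S → V_N) (hreach : ∀ s, K.Reachable (αD c₀) (αD s)) :
    IsValid [orientBy hK hW c₀ fun v => (K.dist (αD c₀) v : ℤ)] G_S αD := by
  refine (isValid_star_iff hstar _ αD fun u v s hs => orientBy_of_ne _ _ _ _ hs u v).mpr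
    fun s => (reachable_singleton_iff _ αD c₀ _).mpr ?_
  exact ReflTransGen.mono (fun _ _ h => orientBy_pos _ _ _ _ h.1 (by exact_mod_cast h.2)) _ _
    (hreach s).reflTransGen_adj_dist_lt

end OneShotStrategy

end Strategy

theorem star_distribution_iff_steiner_tree_general {V V_S : Type*} [Fintype V]
    [Fintype V_S] (G : SimpleGraph V)
    (G_S : SimpleGraph V_S) (c₀ : V_S)
    (hstar : ∀ s₁ s₂, G_S.Adj s₁ s₂ ↔
      (s₁ = c₀ ∧ s₂ ≠ c₀) ∨ (s₂ = c₀ ∧ s₁ ≠ c₀))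
    (S : Finset V)
    (αD : V_S → V)
    (himg : ∀ v, v ∈ S ↔ ∃ s, αD s = v)
    (m : ℕ) :
    (∃ b : OneShotStrategy V V_S G (fun _ => 1),
        IsValid [b] G_S αD ∧ (∀ u v s, s ≠ c₀ → b.b u v s = 0) ∧
        {e : Sym2 V | ∃ u v, e = s(u, v) ∧ b.b u v c₀ ≠ 0}.ncard ≤ m)
      ↔ (∃ H : G.Subgraph, H.Connected ∧ H.edgeSet.ncard ≤ m ∧ ↑S ⊆ H.verts) := by
  classical
  constructor
  · rintro ⟨b, hvalid, hcenter, hcard⟩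
    obtain ⟨H, hconn, hedges, hS⟩ :=
      exists_connected_subgraph_of_isValid_star hstar b αD hcenter hvalid
    refine ⟨H, hconn, ?_, fun v hv => hS ((himg v).mp hv)⟩
    rw [← b.edgeSet_channelGraph] at hcard
    exact (Set.ncard_le_ncard hedges).trans hcard
  · rintro ⟨H, hconn, hcard, hS⟩
    have hαD : ∀ s, αD s ∈ H.verts := fun s => hS ((himg _).mpr ⟨s, rfl⟩)
    refine ⟨.orientBy H.spanningCoe_le (fun _ _ _ => le_rfl) c₀
        fun v => (H.spanningCoe.dist (αD c₀) v : ℤ),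
      OneShotStrategy.isValid_star_orientBy_dist _ _ hstar αD
        fun s => hconn.reachable_spanningCoe (hαD c₀) (hαD s),
      fun u v s hs => OneShotStrategy.orientBy_of_ne _ _ _ _ hs u v, ?_⟩
    rw [← OneShotStrategy.edgeSet_channelGraph]
    calc _ ≤ H.spanningCoe.edgeSet.ncard := Set.ncard_le_ncard
          (SimpleGraph.edgeSet_mono (OneShotStrategy.channelGraph_orientBy_le _ _ _ _))
      _ = H.edgeSet.ncard := by rw [H.edgeSet_spanningCoe]
      _ ≤ m := hcard

/-- **Center-assigned one-shot distribution of a star graph state is equivalent to the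
Steiner tree problem.**  With the network `G` (all widths `1`), a star graph state with
center `c₀`, and `αD` a bijection from `V_S` onto a terminal set `S ⊆ V(G)`, there is a
valid one-shot strategy assigning all channels to the center and using at most `m`
channels iff `G` contains a connected subgraph with at most `m` edges whose vertex set
contains `S`. -/
theorem star_distribution_iff_steiner_tree {V V_S : Type*} [Fintype V] [DecidableEq V]
    [Fintype V_S] (G : SimpleGraph V)
    (G_S : SimpleGraph V_S) (c₀ : V_S)
    (hstar : ∀ s₁ s₂, G_S.Adj s₁ s₂ ↔
      (s₁ = c₀ ∧ s₂ ≠ c₀) ∨ (s₂ = c₀ ∧ s₁ ≠ c₀))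
    (S : Finset V) (hScard : S.card = Fintype.card V_S)
    (αD : V_S → V) (hinj : Function.Injective αD)
    (himg : ∀ v, v ∈ S ↔ ∃ s, αD s = v)
    (m : ℕ) :
    (∃ b : OneShotStrategy V V_S G (fun _ => 1),
        IsValid [b] G_S αD ∧ (∀ u v s, s ≠ c₀ → b.b u v s = 0) ∧
        {e : Sym2 V | ∃ u v, e = s(u, v) ∧ b.b u v c₀ ≠ 0}.ncard ≤ m)
      ↔ (∃ H : G.Subgraph, H.Connected ∧ H.edgeSet.ncard ≤ m ∧ ↑S ⊆ H.verts) :=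
  star_distribution_iff_steiner_tree_general G G_S c₀ hstar S αD himg m
end

section
/- Time-expanded integral decomposition of a single-root flow (the combinatorial content of Theorem 4, 'Simply Executable Edge-disjoint Path Set'): Let G = (V, E) be a finite simple graph with capacities c : E → ℕ, let r ∈ V be a root node, let S be a finite type of requests with target assignment d : S → V, and let N ≥ 1. Suppose there exists an integer flow f with respect to the scaled capacities N·c (i.e., f((u,v)) = −f((v,u)) and |f((u,v))| ≤ N·c(uv) for every edge uv ∈ E) whose divergence satisfies, for every node u, Σ_{v : uv ∈ E} f((u,v)) = (|S| if u = r else 0) − |{s ∈ S : d s = u}|. Then there exist integer flows f_1, …, f_N, each with respect to the capacities c, and an assignment σ : S → Fin N of each request to a shot, such that for every k and every node u, Σ_{v : uv ∈ E} f_k((u,v)) = (|{s : σ s = k}| if u = r else 0) − |{s ∈ S : d s = u and σ s = k}|. In other words, the total flow from the root to the targets can always be split into N per-shot flows, each respecting the single-shot capacities, with every request delivered entirely within one shot. -/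
open Finset

/-!
Split off one shot at a time. If `f` is bounded by `(N + 1) c` and every node `x ≠ r` absorbs
between `0` and `m x` units, then `f / (N + 1)` is a fractional flow `g` with
`|g| ≤ c`, `|f - g| ≤ N c` and `-m ≤ div g ≤ 0` off the root. These bounds are integral, so an
integral such `g` exists: start from any integral `g` within the edge bounds; a node violating
its bound reaches, in the residual graph, the root or a node with slack, and one unit is pushed
along a simple path, for otherwise the reachable nodes form a saturated cut that the fractional
solution shows to be too small. Then `f - g` is bounded by `N c`, so induction gives `N` shots
with demands `μ k` summing to `m`, and the requests at each target are dealt out to the shots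
according to these demands.
-/

theorem List.exists_isChain_cons_nodup_of_relationReflTransGen {α : Type*} {r : α → α → Prop}
    {a b : α} (h : Relation.ReflTransGen r a b) :
    ∃ l, (a :: l).IsChain r ∧ (a :: l).Nodup ∧ (a :: l).getLast (cons_ne_nil _ _) = b := by
  refine Relation.ReflTransGen.head_induction_on h ⟨[], .singleton _, nodup_singleton _, rfl⟩ ?_
  rintro a c hac - ⟨l, hchain, hnodup, hlast⟩
  by_cases ha : a ∈ c :: l
  · obtain ⟨s, t, hst⟩ := append_of_mem ha
    have hsuffix : a :: t <:+ c :: l := ⟨s, hst.symm⟩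
    refine ⟨t, hchain.suffix hsuffix, hnodup.sublist hsuffix.sublist, ?_⟩
    rw [← hlast, getLast_congr _ (by simp) hst, getLast_append_of_ne_nil _ (cons_ne_nil _ _)]
  · exact ⟨c :: l, hchain.cons_cons hac, nodup_cons.2 ⟨ha, hnodup⟩, by rwa [getLast_cons_cons]⟩

theorem exists_card_filter_and_eq {S W : Type*} [Fintype S] [Fintype W] [DecidableEq W]
    (d : S → W) {n : ℕ} (μ : Fin n → W → ℕ) (hμ : ∀ x, ∑ k, μ k x = #{s | d s = x}) :
    ∃ σ : S → Fin n, ∀ k x, #{s | d s = x ∧ σ s = k} = μ k x := by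
  have hcard : ∀ x, Fintype.card {s // d s = x} = Fintype.card (Σ k, Fin (μ k x)) := fun x => by
    simp [Fintype.card_subtype, hμ]
  let E : S ≃ Σ x, Σ k, Fin (μ k x) := (Equiv.sigmaFiberEquiv d).symm.trans
    (Equiv.sigmaCongrRight fun x => Fintype.equivOfCardEq (hcard x))
  refine ⟨fun s => (E s).2.1, fun k x => ?_⟩
  calc #{s | d s = x ∧ (E s).2.1 = k}
      = #(({x} : Finset W).sigma fun _ => ({k} : Finset (Fin n)).sigma fun _ => univ) :=
        card_equiv E fun s => by
          simp only [mem_filter, mem_univ, true_and, mem_sigma, mem_singleton, and_true]; rfl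
    _ = μ k x := by simp

namespace IntFlow

variable {V : Type*}

def IsSkew (g : V → V → ℤ) : Prop := ∀ a b, g a b = -g b a

namespace IsSkew

variable {f g : V → V → ℤ}

theorem zero : IsSkew (0 : V → V → ℤ) := fun _ _ => by simp

theorem neg (hg : IsSkew g) : IsSkew (-g) := fun a b => by simp [hg a b]

theorem add (hf : IsSkew f) (hg : IsSkew g) : IsSkew (f + g) := fun a b => by
  simp only [Pi.add_apply, hf a b, hg a b]; ring

theorem sub (hf : IsSkew f) (hg : IsSkew g) : IsSkew (f - g) := fun a b => by
  simp only [Pi.sub_apply, hf a b, hg a b]; ring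

theorem sum_sum_eq_zero (hg : IsSkew g) (A : Finset V) :
    ∑ x ∈ A, ∑ v ∈ A, g x v = 0 := by
  have h : ∑ x ∈ A, ∑ v ∈ A, g x v = ∑ x ∈ A, ∑ v ∈ A, -g x v := by
    rw [sum_comm]
    exact sum_congr rfl fun x _ => sum_congr rfl fun v _ => hg v x
  simp only [sum_neg_distrib] at h
  linarith

end IsSkew

section PathFlow

variable [DecidableEq V]

def unitFlow (a b : V) : V → V → ℤ :=
  fun x y => (if x = a ∧ y = b then 1 else 0) - (if x = b ∧ y = a then 1 else 0)

theorem isSkew_unitFlow (a b : V) : IsSkew (unitFlow a b) := fun x y => by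
  simp only [unitFlow, and_comm (a := y = a), and_comm (a := y = b)]; ring

def pathFlow : List V → V → V → ℤ
  | [] => 0
  | [_] => 0
  | a :: b :: l => unitFlow a b + pathFlow (b :: l)

theorem isSkew_pathFlow : ∀ l : List V, IsSkew (pathFlow l)
  | [] => IsSkew.zero
  | [_] => IsSkew.zero
  | a :: b :: l => (isSkew_unitFlow a b).add (isSkew_pathFlow (b :: l))

theorem pathFlow_eq_zero_of_not_mem {x : V} : ∀ {l : List V}, x ∉ l → ∀ y, pathFlow l x y = 0
  | [], _, _ => rfl
  | [_], _, _ => rfl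
  | a :: b :: l, hx, y => by
    simp only [List.mem_cons, not_or] at hx
    have ih := pathFlow_eq_zero_of_not_mem (x := x) (l := b :: l) (by simp [hx.2.1, hx.2.2]) y
    simp [pathFlow, unitFlow, hx.1, hx.2.1, ih]

theorem add_pathFlow_le {g U : V → V → ℤ} (hgU : g ≤ U) :
    ∀ {l : List V}, l.Nodup → l.IsChain (fun a b => g a b < U a b) → g + pathFlow l ≤ U
  | [], _, _ => by simpa [pathFlow] using hgU
  | [_], _, _ => by simpa [pathFlow] using hgU
  | a :: b :: l, hnodup, hchain => by
    intro x y
    obtain ⟨hab, hchain'⟩ := List.isChain_cons_cons.1 hchain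
    have ha : a ∉ b :: l := (List.nodup_cons.1 hnodup).1
    have hba : b ≠ a := fun h => ha (h ▸ List.mem_cons_self)
    simp only [Pi.add_apply, pathFlow, unitFlow]
    by_cases hxy : x = a ∨ y = a
    · have hrest : pathFlow (b :: l) x y = 0 := by
        rcases hxy with rfl | rfl
        · exact pathFlow_eq_zero_of_not_mem ha y
        · rw [isSkew_pathFlow _ x, pathFlow_eq_zero_of_not_mem ha x, neg_zero]
      have : g x y ≤ U x y := hgU x y
      rw [hrest]
      by_cases h1 : x = a ∧ y = b
      · obtain ⟨rfl, rfl⟩ := h1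
        split_ifs <;> omega
      · rw [if_neg h1]
        split_ifs <;> omega
    · push Not at hxy
      have := add_pathFlow_le hgU hnodup.of_cons hchain' x y
      simp only [Pi.add_apply] at this
      simp [hxy.1, hxy.2, this]

end PathFlow

section Divergence

variable [Fintype V]

def divergence (g : V → V → ℤ) (x : V) : ℤ := ∑ v, g x v

theorem divergence_add (f g : V → V → ℤ) (x : V) :
    divergence (f + g) x = divergence f x + divergence g x := sum_add_distrib

theorem divergence_sub (f g : V → V → ℤ) (x : V) :
    divergence (f - g) x = divergence f x - divergence g x := sum_sub_distrib _ _

theorem divergence_neg (g : V → V → ℤ) (x : V) : divergence (-g) x = -divergence g x :=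
  sum_neg_distrib _

variable [DecidableEq V]

theorem divergence_unitFlow (a b x : V) :
    divergence (unitFlow a b) x = (if x = a then 1 else 0) - (if x = b then 1 else 0) := by
  simp [divergence, unitFlow, sum_sub_distrib, ite_and]

theorem divergence_pathFlow (a : V) (l : List V) (x : V) :
    divergence (pathFlow (a :: l)) x =
      (if x = a then 1 else 0) - (if x = (a :: l).getLast (List.cons_ne_nil a l) then 1 else 0) := by
  induction l generalizing a with
  | nil => simp [divergence, pathFlow]; exact (sub_self _).symm
  | cons b l ih =>
    rw [pathFlow, divergence_add, divergence_unitFlow, ih, List.getLast_cons_cons]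
    ring

theorem IsSkew.sum_divergence {g : V → V → ℤ} (hg : IsSkew g) (A : Finset V) :
    ∑ x ∈ A, divergence g x = ∑ x ∈ A, ∑ v ∈ Aᶜ, g x v := by
  simp only [divergence, ← sum_add_sum_compl A, sum_add_distrib, hg.sum_sum_eq_zero, zero_add]

theorem IsSkew.divergence_eq_ite {g : V → V → ℤ} (hg : IsSkew g) {r : V} {b : V → ℤ}
    (hb : ∀ x ≠ r, divergence g x = -b x) (x : V) :
    divergence g x = (if x = r then ∑ y, b y else 0) - b x := by
  by_cases hx : x = r
  · subst hx
    have htot : ∑ y, divergence g y = 0 := by simpa using hg.sum_divergence univ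
    rw [← add_sum_erase _ _ (mem_univ x), sum_congr rfl fun y hy => hb y (ne_of_mem_erase hy)]
      at htot
    rw [if_pos rfl, ← add_sum_erase _ _ (mem_univ x), sum_neg_distrib] at *
    linarith
  · rw [if_neg hx, hb x hx, zero_sub]

end Divergence

section Augmentation

variable [Fintype V] [DecidableEq V]

def violation (r : V) (lo hi : V → ℤ) (g : V → V → ℤ) : ℕ :=
  ∑ x ∈ univ.erase r, ((lo x - divergence g x).toNat + (divergence g x - hi x).toNat)

theorem violation_neg (r : V) (lo hi : V → ℤ) (g : V → V → ℤ) :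
    violation r (-hi) (-lo) (-g) = violation r lo hi g := by
  refine sum_congr rfl fun x _ => ?_
  simp only [divergence_neg, Pi.neg_apply]
  omega

variable {M : ℤ} {F U g : V → V → ℤ} {lo hi : V → ℤ} {r u : V}

/-- Otherwise the nodes reachable from `u` would form a cut saturated by `g`, too small for the
fractional flow `F / M`. -/
theorem exists_reachable_of_divergence_lt (hM : 0 < M) (hF : IsSkew F) (hFU : F ≤ M • U)
    (hFlo : ∀ x ≠ r, M * lo x ≤ divergence F x) (hg : IsSkew g) (hu : divergence g u < lo u) :
    ∃ x, Relation.ReflTransGen (fun a b => g a b < U a b) u x ∧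
      (x = r ∨ lo x < divergence g x) := by
  classical
  by_contra! hnone
  set A := univ.filter (Relation.ReflTransGen (fun a b => g a b < U a b) u)
  have hA : ∀ x ∈ A, x ≠ r ∧ divergence g x ≤ lo x := fun x hx => hnone x (mem_filter.1 hx).2
  have huA : u ∈ A := mem_filter.2 ⟨mem_univ u, .refl⟩
  have hsat : ∀ x ∈ A, ∀ v ∈ Aᶜ, M * U x v ≤ M * g x v := by
    intro x hx v hv
    refine mul_le_mul_of_nonneg_left (not_lt.1 fun hlt => ?_) hM.le
    exact mem_compl.1 hv (mem_filter.2 ⟨mem_univ v, (mem_filter.1 hx).2.tail hlt⟩)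
  have hlt : ∑ x ∈ A, divergence g x < ∑ x ∈ A, lo x :=
    sum_lt_sum (fun x hx => (hA x hx).2) ⟨u, huA, hu⟩
  have hle : M * ∑ x ∈ A, lo x ≤ M * ∑ x ∈ A, divergence g x :=
    calc M * ∑ x ∈ A, lo x ≤ ∑ x ∈ A, divergence F x := by
          rw [mul_sum]; exact sum_le_sum fun x hx => hFlo x (hA x hx).1
    _ = ∑ x ∈ A, ∑ v ∈ Aᶜ, F x v := hF.sum_divergence A
    _ ≤ ∑ x ∈ A, ∑ v ∈ Aᶜ, M * g x v :=
          sum_le_sum fun x hx => sum_le_sum fun v hv => (hFU x v).trans (hsat x hx v hv)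
    _ = M * ∑ x ∈ A, divergence g x := by simp only [hg.sum_divergence A, mul_sum]
  linarith [mul_lt_mul_of_pos_left hlt hM]

theorem violation_add_pathFlow_lt (hlohi : lo u ≤ hi u) (hur : u ≠ r)
    (hu : divergence g u < lo u) {x : V} (hx : x = r ∨ lo x < divergence g x) {l : List V}
    (hlast : (u :: l).getLast (List.cons_ne_nil u l) = x) :
    violation r lo hi (g + pathFlow (u :: l)) < violation r lo hi g := by
  have hux : u ≠ x := by rintro rfl; exact hx.elim hur fun h => by omega
  have hdiv : ∀ y, divergence (g + pathFlow (u :: l)) y =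
      divergence g y + (if y = u then 1 else 0) - (if y = x then 1 else 0) := by
    intro y; rw [divergence_add, divergence_pathFlow, hlast]; ring
  refine sum_lt_sum (fun y hy => ?_) ⟨u, mem_erase.2 ⟨hur, mem_univ u⟩, ?_⟩
  · have hyr := ne_of_mem_erase hy
    rw [hdiv]
    by_cases hyu : y = u
    · subst hyu
      rw [if_pos rfl, if_neg hux]
      omega
    by_cases hyx : y = x
    · subst hyx
      have := hx.resolve_left hyr
      rw [if_neg hyu, if_pos rfl]
      omega
    rw [if_neg hyu, if_neg hyx]
    omega
  · rw [hdiv, if_pos rfl, if_neg hux]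
    omega

theorem exists_violation_lt_of_divergence_lt (hM : 0 < M) (hF : IsSkew F) (hFU : F ≤ M • U)
    (hFdiv : ∀ x ≠ r, divergence F x ∈ Set.Icc (M * lo x) (M * hi x)) (hg : IsSkew g)
    (hgU : g ≤ U) (hur : u ≠ r) (hu : divergence g u < lo u) :
    ∃ g', IsSkew g' ∧ g' ≤ U ∧ violation r lo hi g' < violation r lo hi g := by
  obtain ⟨x, hreach, hx⟩ :=
    exists_reachable_of_divergence_lt hM hF hFU (fun x hx => (hFdiv x hx).1) hg hu
  obtain ⟨l, hchain, hnodup, hlast⟩ :=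
    List.exists_isChain_cons_nodup_of_relationReflTransGen hreach
  have hlohi : lo u ≤ hi u := le_of_mul_le_mul_left ((hFdiv u hur).1.trans (hFdiv u hur).2) hM
  exact ⟨g + pathFlow (u :: l), hg.add (isSkew_pathFlow _), add_pathFlow_le hgU hnodup hchain,
    violation_add_pathFlow_lt hlohi hur hu hx hlast⟩

/-- The excess case is the deficit case for the reversed flows `-F` and `-g`. -/
theorem exists_violation_lt_of_lt_divergence (hM : 0 < M) (hF : IsSkew F) (hFU : F ≤ M • U)
    (hFdiv : ∀ x ≠ r, divergence F x ∈ Set.Icc (M * lo x) (M * hi x)) (hg : IsSkew g)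
    (hgU : g ≤ U) (hur : u ≠ r) (hu : hi u < divergence g u) :
    ∃ g', IsSkew g' ∧ g' ≤ U ∧ violation r lo hi g' < violation r lo hi g := by
  have hswap {h : V → V → ℤ} (hh : IsSkew h) {B : V → V → ℤ} (hhB : h ≤ B) :
      -h ≤ Function.swap B := fun a b => by
    simpa [Function.swap, ← hh b a] using hhB b a
  obtain ⟨g', hg', hg'U, hlt⟩ := exists_violation_lt_of_divergence_lt (lo := -hi) (hi := -lo)
    hM hF.neg (hswap hF hFU)
    (fun x hx => by
      simp only [divergence_neg, Pi.neg_apply, Set.mem_Icc, mul_neg, neg_le_neg_iff]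
      exact (hFdiv x hx).symm)
    hg.neg (hswap hg hgU) hur (by simpa [divergence_neg] using hu)
  refine ⟨-g', hg'.neg, by simpa using hswap hg' hg'U, ?_⟩
  rwa [← violation_neg r lo hi g, ← violation_neg r lo hi (-g'), neg_neg]

theorem exists_isSkew_le_divergence_mem_Icc (hM : 0 < M) (hF : IsSkew F) (hFU : F ≤ M • U)
    (hFdiv : ∀ x ≠ r, divergence F x ∈ Set.Icc (M * lo x) (M * hi x)) {g₀ : V → V → ℤ}
    (hg₀ : IsSkew g₀) (hg₀U : g₀ ≤ U) :
    ∃ g, IsSkew g ∧ g ≤ U ∧ ∀ x ≠ r, divergence g x ∈ Set.Icc (lo x) (hi x) := by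
  obtain ⟨g, ⟨hg, hgU⟩, hmin⟩ := (wellFounded_lt.onFun (f := violation r lo hi)).has_min
    {g | IsSkew g ∧ g ≤ U} ⟨g₀, hg₀, hg₀U⟩
  refine ⟨g, hg, hgU, fun x hx => ?_⟩
  by_contra hout
  rw [Set.mem_Icc, not_and_or, not_le, not_le] at hout
  obtain ⟨g', hg', hg'U, hlt⟩ := hout.elim
    (exists_violation_lt_of_divergence_lt hM hF hFU hFdiv hg hgU hx)
    (exists_violation_lt_of_lt_divergence hM hF hFU hFdiv hg hgU hx)
  exact hmin g' ⟨hg', hg'U⟩ hlt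

end Augmentation

section BoundedFlow

variable (G : SimpleGraph V)

structure IsBoundedFlow (κ : Sym2 V → ℤ) (f : V → V → ℤ) : Prop where
  isSkew : IsSkew f
  eq_zero_of_not_adj : ∀ u v, ¬ G.Adj u v → f u v = 0
  abs_le : ∀ u v, G.Adj u v → |f u v| ≤ κ s(u, v)

variable {G}

theorem IsBoundedFlow.mono {κ κ' : Sym2 V → ℤ} {f : V → V → ℤ} (hf : IsBoundedFlow G κ f)
    (hκ : ∀ e, κ e ≤ κ' e) : IsBoundedFlow G κ' f :=
  ⟨hf.isSkew, hf.eq_zero_of_not_adj, fun u v h => (hf.abs_le u v h).trans (hκ _)⟩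

variable {κ : Sym2 V → ℤ} {N : ℕ} {f : V → V → ℤ}

section ShotCap

variable [DecidableRel G.Adj]

variable (G) in
/-- Together with skewness, `g ≤ shotCap G κ N f` says that `g` vanishes off `G`, `|g| ≤ κ` and
`|f - g| ≤ N κ`. -/
def shotCap (κ : Sym2 V → ℤ) (N : ℕ) (f : V → V → ℤ) : V → V → ℤ :=
  fun a b => if G.Adj a b then min (κ s(a, b)) (f a b + N * κ s(a, b)) else 0

theorem IsBoundedFlow.le_smul_shotCap (hf : IsBoundedFlow G (fun e => (N + 1) * κ e) f) :
    f ≤ ((N : ℤ) + 1) • shotCap G κ N f := fun a b => by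
  by_cases h : G.Adj a b
  · obtain ⟨hlo, hhi⟩ := _root_.abs_le.1 (hf.abs_le a b h)
    have hκ : 0 ≤ κ s(a, b) := by nlinarith
    simp only [shotCap, if_pos h, Pi.smul_apply, smul_eq_mul]
    rw [mul_min_of_nonneg _ _ (by positivity)]
    apply le_min <;> nlinarith
  · simp [shotCap, h, hf.eq_zero_of_not_adj a b h]

theorem IsBoundedFlow.exists_isSkew_le_shotCap
    (hf : IsBoundedFlow G (fun e => (N + 1) * κ e) f) :
    ∃ g, IsSkew g ∧ g ≤ shotCap G κ N f := by
  have hbounds : ∀ a b, G.Adj a b →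
      0 ≤ κ s(a, b) ∧ -(N * κ s(a, b)) - κ s(a, b) ≤ f a b ∧ 0 ≤ N * κ s(a, b) := fun a b h => by
    obtain ⟨hlo, hhi⟩ := _root_.abs_le.1 (hf.abs_le a b h)
    have hκ : 0 ≤ κ s(a, b) := by nlinarith
    exact ⟨hκ, by linarith, by positivity⟩
  refine ⟨fun a b => if G.Adj a b then max (-κ s(a, b)) (min (κ s(a, b)) (f a b)) else 0,
    fun a b => ?_, fun a b => ?_⟩
  all_goals by_cases h : G.Adj a b
  · have := hbounds a b h
    simp only [if_pos h, if_pos h.symm, Sym2.eq_swap (a := b), hf.isSkew b a]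
    omega
  · simp [h, G.adj_comm b a]
  · have := hbounds a b h
    simp only [shotCap, if_pos h]
    omega
  · simp [shotCap, h]

theorem isBoundedFlow_of_le_shotCap (hf : IsSkew f) (hf0 : ∀ u v, ¬ G.Adj u v → f u v = 0)
    {g : V → V → ℤ} (hg : IsSkew g) (hgU : g ≤ shotCap G κ N f) :
    IsBoundedFlow G κ g ∧ IsBoundedFlow G (fun e => N * κ e) (f - g) := by
  have hzero : ∀ a b, ¬ G.Adj a b → g a b = 0 := fun a b h => by
    have hab : g a b ≤ shotCap G κ N f a b := hgU a b
    have hba : g b a ≤ shotCap G κ N f b a := hgU b a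
    simp only [shotCap, if_neg h, G.adj_comm b a, hg b a] at hab hba
    omega
  have hbounds : ∀ a b, G.Adj a b →
      |g a b| ≤ κ s(a, b) ∧ |(f - g) a b| ≤ N * κ s(a, b) := fun a b h => by
    have hab : g a b ≤ shotCap G κ N f a b := hgU a b
    have hba : g b a ≤ shotCap G κ N f b a := hgU b a
    simp only [shotCap, if_pos h, if_pos h.symm, Sym2.eq_swap (a := b), le_min_iff,
      hg b a, hf b a] at hab hba
    simp only [Pi.sub_apply, _root_.abs_le]
    omega
  refine ⟨⟨hg, hzero, fun a b h => (hbounds a b h).1⟩,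
    ⟨hf.sub hg, fun a b h => ?_, fun a b h => (hbounds a b h).2⟩⟩
  simp [hf0 a b h, hzero a b h]

end ShotCap

variable [Fintype V]

theorem IsBoundedFlow.sum_neighborFinset_eq_divergence [DecidableRel G.Adj]
    (hf : IsBoundedFlow G κ f) (u : V) :
    ∑ v ∈ G.neighborFinset u, f u v = divergence f u :=
  sum_subset (subset_univ _) fun v _ hv =>
    hf.eq_zero_of_not_adj u v (by rwa [SimpleGraph.mem_neighborFinset] at hv)

variable [DecidableEq V]

/-- The flow `f / (N + 1)` satisfies the bounds on a shot, so an integral flow does. -/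
theorem IsBoundedFlow.exists_shot {r : V} {lo hi : V → ℤ}
    (hf : IsBoundedFlow G (fun e => (N + 1) * κ e) f)
    (hdiv : ∀ x ≠ r, divergence f x ∈ Set.Icc ((N + 1) * lo x) ((N + 1) * hi x)) :
    ∃ g, IsBoundedFlow G κ g ∧ IsBoundedFlow G (fun e => N * κ e) (f - g) ∧
      ∀ x ≠ r, divergence g x ∈ Set.Icc (lo x) (hi x) := by
  classical
  obtain ⟨g₀, hg₀, hg₀U⟩ := hf.exists_isSkew_le_shotCap
  obtain ⟨g, hg, hgU, hgdiv⟩ :=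
    exists_isSkew_le_divergence_mem_Icc (by positivity) hf.isSkew hf.le_smul_shotCap hdiv hg₀ hg₀U
  obtain ⟨hgκ, hfg⟩ := isBoundedFlow_of_le_shotCap hf.isSkew hf.eq_zero_of_not_adj hg hgU
  exact ⟨g, hgκ, hfg, hgdiv⟩

theorem IsBoundedFlow.exists_decomposition {r : V} :
    ∀ (N : ℕ) {m : V → ℕ} {f : V → V → ℤ}, IsBoundedFlow G (fun e => (N + 1) * κ e) f →
      (∀ x ≠ r, divergence f x = -m x) →
      ∃ (f' : Fin (N + 1) → V → V → ℤ) (μ : Fin (N + 1) → V → ℕ), (∀ x, ∑ k, μ k x = m x) ∧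
        ∀ k, IsBoundedFlow G κ (f' k) ∧ ∀ x ≠ r, divergence (f' k) x = -μ k x
  | 0, m, f, hf, hdiv => ⟨fun _ => f, fun _ => m, by simp, fun _ => ⟨hf.mono (by simp), hdiv⟩⟩
  | N + 1, m, f, hf, hdiv => by
    obtain ⟨g, hg, hfg, hgdiv⟩ := hf.exists_shot (lo := fun x => -(m x : ℤ)) (hi := fun _ => 0)
      fun x hx => by
        rw [hdiv x hx, Set.mem_Icc]
        constructor <;> push_cast <;> nlinarith [(m x).cast_nonneg (α := ℤ)]
    let m₁ : V → ℕ := fun x => if x = r then 0 else (-divergence g x).toNat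
    have hm₁ : ∀ x ≠ r, (m₁ x : ℤ) = -divergence g x := fun x hx => by
      have := hgdiv x hx
      simp only [m₁, if_neg hx, Set.mem_Icc] at this ⊢
      omega
    have hm₁m : ∀ x, m₁ x ≤ m x := fun x => by
      by_cases hx : x = r
      · simp [m₁, hx]
      · have := hm₁ x hx; have := (hgdiv x hx).1; omega
    obtain ⟨f', μ, hμ, hf'⟩ := exists_decomposition N (m := fun x => m x - m₁ x)
      (hfg.mono fun e => by push_cast; rfl) fun x hx => by
        have := hm₁ x hx
        rw [divergence_sub, hdiv x hx, Nat.cast_sub (hm₁m x)]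
        linarith
    refine ⟨Fin.cons g f', Fin.cons m₁ μ, fun x => ?_, fun k => Fin.cases ?_ (fun k => ?_) k⟩
    · simp only [Fin.sum_univ_succ, Fin.cons_zero, Fin.cons_succ, hμ]
      have := hm₁m x
      omega
    · exact ⟨hg, fun x hx => by simp [hm₁ x hx]⟩
    · simpa using hf' k

end BoundedFlow

end IntFlow

theorem time_expanded_flow_decomposition_general {V : Type*} [Fintype V] [DecidableEq V]
    (G : SimpleGraph V) [DecidableRel G.Adj] (c : Sym2 V → ℕ) (r : V)
    (S : Type*) [Fintype S] (d : S → V)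
    (N : ℕ) (hN : 1 ≤ N)
    (f : V → V → ℤ)
    (hanti : ∀ u v, f u v = - f v u)
    (hsupp : ∀ u v, ¬ G.Adj u v → f u v = 0)
    (hcap : ∀ u v, G.Adj u v → |f u v| ≤ (N : ℤ) * (c (Sym2.mk u v) : ℤ))
    (hdiv : ∀ u, ∑ v ∈ G.neighborFinset u, f u v =
      (if u = r then (Fintype.card S : ℤ) else 0)
        - ((univ.filter fun s => d s = u).card : ℤ)) :
    ∃ (f' : Fin N → V → V → ℤ) (σ : S → Fin N),
      (∀ k u v, f' k u v = - f' k v u) ∧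
      (∀ k u v, ¬ G.Adj u v → f' k u v = 0) ∧
      (∀ k u v, G.Adj u v → |f' k u v| ≤ (c (Sym2.mk u v) : ℤ)) ∧
      (∀ k u, ∑ v ∈ G.neighborFinset u, f' k u v =
        (if u = r then ((univ.filter fun s => σ s = k).card : ℤ) else 0)
          - ((univ.filter fun s => d s = u ∧ σ s = k).card : ℤ)) := by
  obtain ⟨n, rfl⟩ := Nat.exists_eq_add_of_le' hN
  have hf : IntFlow.IsBoundedFlow G (fun e => ((n : ℤ) + 1) * c e) f :=
    ⟨hanti, hsupp, by exact_mod_cast hcap⟩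
  obtain ⟨f', μ, hμ, hf'⟩ := hf.exists_decomposition n (m := fun x => #{s | d s = x})
    fun x hx => by rw [← hf.sum_neighborFinset_eq_divergence, hdiv, if_neg hx, zero_sub]
  obtain ⟨σ, hσ⟩ := exists_card_filter_and_eq d μ hμ
  have hcard_shot : ∀ k, ∑ x, μ k x = #{s | σ s = k} := fun k => by
    rw [card_eq_sum_card_fiberwise (f := d) (t := univ) fun _ _ => mem_univ _]
    refine sum_congr rfl fun x _ => ?_
    rw [← hσ, filter_filter]
    simp_rw [and_comm]
  refine ⟨f', σ, fun k => (hf' k).1.isSkew, fun k => (hf' k).1.eq_zero_of_not_adj,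
    fun k => (hf' k).1.abs_le, fun k u => ?_⟩
  rw [(hf' k).1.sum_neighborFinset_eq_divergence,
    (hf' k).1.isSkew.divergence_eq_ite (b := fun x => (μ k x : ℤ)) (hf' k).2, hσ, ← hcard_shot]
  push_cast
  rfl

/-- **Time-expanded integral decomposition of a single-root flow** (the combinatorial
content of the 'Simply Executable Edge-disjoint Path Set' theorem).  If an integer flow
with respect to the scaled capacities `N·c` routes, from the root `r`, one unit of flow
to the target `d s` of every request `s`, then it can be split into `N` per-shot integer
flows, each respecting the single-shot capacities `c`, together with an assignment
`σ` of each request to a shot in which it is delivered entirely. -/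
theorem time_expanded_flow_decomposition {V : Type*} [Fintype V] [DecidableEq V]
    (G : SimpleGraph V) [DecidableRel G.Adj] (c : Sym2 V → ℕ) (r : V)
    (S : Type*) [Fintype S] [DecidableEq S] (d : S → V)
    (N : ℕ) (hN : 1 ≤ N)
    (f : V → V → ℤ)
    (hanti : ∀ u v, f u v = - f v u)
    (hsupp : ∀ u v, ¬ G.Adj u v → f u v = 0)
    (hcap : ∀ u v, G.Adj u v → |f u v| ≤ (N : ℤ) * (c (Sym2.mk u v) : ℤ))
    (hdiv : ∀ u, ∑ v ∈ G.neighborFinset u, f u v =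
      (if u = r then (Fintype.card S : ℤ) else 0)
        - ((univ.filter fun s => d s = u).card : ℤ)) :
    ∃ (f' : Fin N → V → V → ℤ) (σ : S → Fin N),
      (∀ k u v, f' k u v = - f' k v u) ∧
      (∀ k u v, ¬ G.Adj u v → f' k u v = 0) ∧
      (∀ k u v, G.Adj u v → |f' k u v| ≤ (c (Sym2.mk u v) : ℤ)) ∧
      (∀ k u, ∑ v ∈ G.neighborFinset u, f' k u v =
        (if u = r then ((univ.filter fun s => σ s = k).card : ℤ) else 0)
          - ((univ.filter fun s => d s = u ∧ σ s = k).card : ℤ)) :=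
  time_expanded_flow_decomposition_general G c r S d N hN f hanti hsupp hcap hdiv
end
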